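/- arXiv:math/0308095 — 5 statements merged into one kernel-verified Lean document; each statement's English description precedes it below -/
import Mathlib

section
/- Let A be an associative F-algebra graded by an abelian group G, r : G → G → Fˣ a bicharacter, and [x,y] = x*y − r(|y|,|x|) • y*x for homogeneous x, y. Then the following are equivalent: (a) for all homogeneous x, y: (r(|y|,|x|) − r(|x|,|y|)⁻¹) • (y * x) = 0; (b) for all homogeneous x, y: (r(|y|,|x|) − r(|x|,|y|)⁻¹) • [y,x] = 0. -/
/-!
With `d = r(|x|,|y|) r(|y|,|x|) - 1`, both scalars `r(|y|,|x|) - r(|x|,|y|)⁻¹` and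
`r(|x|,|y|) - r(|y|,|x|)⁻¹` are unit multiples of `d`. Applying either condition to the pairs
`(x, y)` and `(y, x)` together, (a) says `d • yx = d • xy = 0`, while (b) says
`d • yx = r(|x|,|y|) • d • xy` and `d • xy = r(|y|,|x|) • d • yx`. The latter give
`d • yx = (d + 1) • d • yx`, i.e. `d² • yx = 0`, hence `d • yx = 0` since `A` has no torsion over `F`.
-/

theorem Units.val_sub_val_inv_smul_eq_zero_iff {R M : Type*} [CommRing R] [AddCommGroup M]
    [Module R M] (a b : Rˣ) (u : M) :
    ((b : R) - ((a⁻¹ : Rˣ) : R)) • u = 0 ↔ ((a : R) * b - 1) • u = 0 := by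
  have hfactor : (b : R) - ((a⁻¹ : Rˣ) : R) = ((a⁻¹ : Rˣ) : R) * (a * b - 1) := by
    rw [mul_sub, ← mul_assoc, Units.inv_mul, one_mul, mul_one]
  rw [hfactor, mul_smul, ← Units.smul_def, smul_eq_zero_iff_eq]

section TorsionFree

variable {R M : Type*} [CommRing R] [IsDomain R] [AddCommGroup M] [Module R M]
  [Module.IsTorsionFree R M]

theorem smul_eq_zero_and_smul_eq_zero_iff_smul_sub_smul (a b : R) (u v : M) :
    (a * b - 1) • u = 0 ∧ (a * b - 1) • v = 0 ↔
      (a * b - 1) • (u - a • v) = 0 ∧ (a * b - 1) • (v - b • u) = 0 := by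
  set d := a * b - 1
  constructor
  · rintro ⟨hu, hv⟩
    simp [smul_sub, smul_comm d, hu, hv]
  · rintro ⟨hu, hv⟩
    rw [smul_sub, sub_eq_zero, smul_comm d a] at hu
    rw [smul_sub, sub_eq_zero, smul_comm d b] at hv
    have hdu : d • u = 0 := by
      have hdd : (d * d) • u = 0 := by
        rw [mul_smul, sub_smul, one_smul, mul_smul, ← hv, ← hu, sub_self]
      rcases smul_eq_zero.mp hdd with hd | hu0
      · rw [mul_self_eq_zero.mp hd, zero_smul]
      · rw [hu0, smul_zero]
    exact ⟨hdu, by rw [hv, hdu, smul_zero]⟩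

theorem Units.smul_eq_zero_and_smul_eq_zero_iff_smul_sub_smul (a b : Rˣ) (u v : M) :
    ((b : R) - ((a⁻¹ : Rˣ) : R)) • u = 0 ∧ ((a : R) - ((b⁻¹ : Rˣ) : R)) • v = 0 ↔
      ((b : R) - ((a⁻¹ : Rˣ) : R)) • (u - (a : R) • v) = 0 ∧
        ((a : R) - ((b⁻¹ : Rˣ) : R)) • (v - (b : R) • u) = 0 := by
  simp only [Units.val_sub_val_inv_smul_eq_zero_iff, mul_comm (b : R) a]
  exact _root_.smul_eq_zero_and_smul_eq_zero_iff_smul_sub_smul _ _ u v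

end TorsionFree

theorem mC_eq_mCinv_iff_brC_eq_brCinv_general {F G A : Type*} [Field F] [AddCommGroup G]
    [Ring A] [Algebra F A]
    (r : G → G → Fˣ)
    (𝒜 : G → Submodule F A) :
    (∀ (gx gy : G) (x y : A), x ∈ 𝒜 gx → y ∈ 𝒜 gy →
        (((r gy gx : Fˣ) : F) - (((r gx gy)⁻¹ : Fˣ) : F)) • (y * x) = 0) ↔
    (∀ (gx gy : G) (x y : A), x ∈ 𝒜 gx → y ∈ 𝒜 gy →
        (((r gy gx : Fˣ) : F) - (((r gx gy)⁻¹ : Fˣ) : F)) •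
          (y * x - ((r gx gy : Fˣ) : F) • (x * y)) = 0) := by
  have hpair := fun gx gy (x y : A) =>
    Units.smul_eq_zero_and_smul_eq_zero_iff_smul_sub_smul (r gx gy) (r gy gx) (y * x) (x * y)
  constructor
  · intro h gx gy x y hx hy
    exact ((hpair gx gy x y).1 ⟨h gx gy x y hx hy, h gy gx y x hy hx⟩).1
  · intro h gx gy x y hx hy
    exact ((hpair gx gy x y).2 ⟨h gx gy x y hx hy, h gy gx y x hy hx⟩).1

/-- Corollary 1.5 ((ii) ⟺ (iii)) in the `G`-graded setting:
`(r(|y|,|x|) − r(|x|,|y|)⁻¹) • (y*x) = 0` for all homogeneous `x, y` iff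
`(r(|y|,|x|) − r(|x|,|y|)⁻¹) • [y,x] = 0` for all homogeneous `x, y`,
where `[x,y] = x*y − r(|y|,|x|) • y*x`. -/
theorem mC_eq_mCinv_iff_brC_eq_brCinv {F G A : Type*} [Field F] [AddCommGroup G]
    [Ring A] [Algebra F A]
    (r : G → G → Fˣ)
    (hr1 : ∀ g h k, r (g + h) k = r g k * r h k)
    (hr2 : ∀ g h k, r g (h + k) = r g h * r g k)
    (𝒜 : G → Submodule F A)
    (hmul : ∀ g h : G, ∀ x ∈ 𝒜 g, ∀ y ∈ 𝒜 h, x * y ∈ 𝒜 (g + h)) :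
    (∀ (gx gy : G) (x y : A), x ∈ 𝒜 gx → y ∈ 𝒜 gy →
        (((r gy gx : Fˣ) : F) - (((r gx gy)⁻¹ : Fˣ) : F)) • (y * x) = 0) ↔
    (∀ (gx gy : G) (x y : A), x ∈ 𝒜 gx → y ∈ 𝒜 gy →
        (((r gy gx : Fˣ) : F) - (((r gx gy)⁻¹ : Fˣ) : F)) •
          (y * x - ((r gx gy : Fˣ) : F) • (x * y)) = 0) :=
  mC_eq_mCinv_iff_brC_eq_brCinv_general r 𝒜
end

section
/- Let G be an additive abelian group and r : G → G → Fˣ a skew-symmetric bicharacter over a field F. Define r₀ : G → G → Fˣ by r₀(g,h) = −1 if r(g,g) = −1 and r(h,h) = −1, and r₀(g,h) = 1 otherwise. Then r₀ is again a skew-symmetric bicharacter of G, and (r₀)₀ = r₀. -/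
open scoped Classical

/-- The 'super' bicharacter `r₀` associated to a skew-symmetric bicharacter `r`
(`r₀(g,h) = −1` if `r(g,g) = r(h,h) = −1`, else `1`) is again a skew-symmetric
bicharacter, and `(r₀)₀ = r₀`. -/
theorem super_bicharacter {F G : Type*} [Field F] [AddCommGroup G]
    (r : G → G → Fˣ)
    (hr1 : ∀ g h k, r (g + h) k = r g k * r h k)
    (hr2 : ∀ g h k, r g (h + k) = r g h * r g k)
    (hskew : ∀ u v, r u v * r v u = 1) :
    let r₀ : G → G → Fˣ := fun g h => if r g g = -1 ∧ r h h = -1 then -1 else 1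
    (∀ g h k, r₀ (g + h) k = r₀ g k * r₀ h k) ∧
    (∀ g h k, r₀ g (h + k) = r₀ g h * r₀ g k) ∧
    (∀ u v, r₀ u v * r₀ v u = 1) ∧
    (∀ g h, (if r₀ g g = -1 ∧ r₀ h h = -1 then (-1 : Fˣ) else 1) = r₀ g h) := by
  intro r₀
  have hsq : ∀ g, r g g = 1 ∨ r g g = -1 := by
    intro g
    have h := hskew g g
    have h' : ((r g g : F)) * ((r g g : F)) = 1 := by
      simpa using congrArg (Units.val) h
    rcases mul_self_eq_one_iff.mp h' with h'' | h''
    · left; ext; exact h''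
    · right; ext; simpa using h''
  have hadd : ∀ g h, r (g + h) (g + h) = r g g * r h h := by
    intro g h
    rw [hr1, hr2, hr2]
    have h1 : r g h * r h g = 1 := hskew g h
    calc r g g * r g h * (r h g * r h h)
        = (r g h * r h g) * (r g g * r h h) := by
          simp [mul_comm, mul_left_comm, mul_assoc]
      _ = r g g * r h h := by rw [h1, one_mul]
  by_cases hdeg : (1 : Fˣ) = -1
  · refine ⟨?_, ?_, ?_, ?_⟩ <;> intros <;> simp [r₀, hdeg.symm]
  · have hne : ((1 : Fˣ) = -1) = False := by simp [hdeg]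
    have hne' : ((-1 : Fˣ) = 1) = False :=
      eq_false (fun h => hdeg h.symm)
    refine ⟨?_, ?_, ?_, ?_⟩
    · intro g h k
      rcases hsq g with hg | hg <;> rcases hsq h with hh | hh <;>
        rcases hsq k with hk | hk <;>
        simp [r₀, hadd, hg, hh, hk, hne, hne']
    · intro g h k
      rcases hsq g with hg | hg <;> rcases hsq h with hh | hh <;>
        rcases hsq k with hk | hk <;>
        simp [r₀, hadd, hg, hh, hk, hne, hne']
    · intro u v
      rcases hsq u with hu | hu <;> rcases hsq v with hv | hv <;>
        simp [r₀, hu, hv, hne, hne']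
    · intro g h
      rcases hsq g with hg | hg <;> rcases hsq h with hh | hh <;>
        simp [r₀, hg, hh, hne, hne']
end

section
/- Let G be a finite additive abelian group, F a field, r : G → G → Fˣ a bicharacter, and let a, b ∈ Matrix G G F be homogeneous of degrees u and −u respectively (a i j = 0 unless i = j + u, and b i j = 0 unless i = j − u). Then tr_q(a*b − r(−u,u) • b*a) = Σ_{g ∈ G} r(g,g) * (1 − r(g,u)⁻¹ * r(u,g)⁻¹) * a g (g−u) * b (g−u) g, where tr_q(c) = Σ_g r(g,g) c g g. -/
/-- The quantum-trace formula underlying Lemma 2.4: for homogeneous matrices `a, b` of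
degrees `u, −u`,
`tr_q(ab − r(−u,u) ba) = Σ_g r(g,g)(1 − r(g,u)⁻¹ r(u,g)⁻¹) a g (g−u) b (g−u) g`. -/
theorem quantum_trace_bracket_formula {G F : Type*} [AddCommGroup G] [Fintype G]
    [DecidableEq G] [Field F]
    (r : G → G → Fˣ)
    (hr1 : ∀ g h k, r (g + h) k = r g k * r h k)
    (hr2 : ∀ g h k, r g (h + k) = r g h * r g k)
    (u : G) (a b : Matrix G G F)
    (ha : ∀ i j, a i j ≠ 0 → i = j + u)
    (hb : ∀ i j, b i j ≠ 0 → i = j + (-u)) :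
    ∑ g : G, ((r g g : Fˣ) : F) * ((a * b - ((r (-u) u : Fˣ) : F) • (b * a)) g g)
      = ∑ g : G, ((r g g : Fˣ) : F) *
          (1 - (((r g u)⁻¹ : Fˣ) : F) * (((r u g)⁻¹ : Fˣ) : F)) *
          a g (g - u) * b (g - u) g := by
  -- basic bicharacter facts
  have hr0 : ∀ g, r g 0 = 1 := by
    intro g
    have h := hr2 g 0 0
    rw [add_zero] at h
    exact (left_eq_mul.mp h)
  have h0r : ∀ g, r 0 g = 1 := by
    intro g
    have h := hr1 0 0 g
    rw [add_zero] at h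
    exact (left_eq_mul.mp h)
  have hrneg : ∀ g h, r g (-h) = (r g h)⁻¹ := by
    intro g h
    have : r g h * r g (-h) = 1 := by
      rw [← hr2, add_neg_cancel, hr0]
    exact (inv_eq_of_mul_eq_one_right this).symm
  have hnegr : ∀ g h, r (-g) h = (r g h)⁻¹ := by
    intro g h
    have : r g h * r (-g) h = 1 := by
      rw [← hr1, add_neg_cancel, h0r]
    exact (inv_eq_of_mul_eq_one_right this).symm
  -- key unit identity
  have key : ∀ g : G, r (g - u) (g - u) * r (-u) u
      = r g g * (r g u)⁻¹ * (r u g)⁻¹ := by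
    intro g
    have h1 : r (g - u) (g - u) = r g g * (r g u)⁻¹ * (r u g)⁻¹ * (r u u) := by
      rw [sub_eq_add_neg, hr1, hr2, hr2, hrneg, hnegr, hnegr, hrneg]
      group
    rw [h1, hnegr]
    group
  -- diagonal entries of products
  have hab : ∀ g : G, (a * b) g g = a g (g - u) * b (g - u) g := by
    intro g
    rw [Matrix.mul_apply]
    refine Finset.sum_eq_single (g - u) ?_ (by simp)
    intro k _ hk
    rcases eq_or_ne (a g k) 0 with h | h
    · rw [h, zero_mul]
    · exact absurd (by rw [ha g k h]; abel) hk
  have hba : ∀ g : G, (b * a) g g = b g (g + u) * a (g + u) g := by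
    intro g
    rw [Matrix.mul_apply]
    refine Finset.sum_eq_single (g + u) ?_ (by simp)
    intro k _ hk
    rcases eq_or_ne (b g k) 0 with h | h
    · rw [h, zero_mul]
    · exfalso
      apply hk
      have := hb g k h
      rw [this]
      abel
  have step1 : ∑ g : G, ((r g g : Fˣ) : F) * ((a * b - ((r (-u) u : Fˣ) : F) • (b * a)) g g)
      = (∑ g : G, ((r g g : Fˣ) : F) * (a g (g - u) * b (g - u) g))
        - ∑ g : G, (((r g g : Fˣ) : F) * ((r (-u) u : Fˣ) : F))
            * (b g (g + u) * a (g + u) g) := by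
    rw [← Finset.sum_sub_distrib]
    refine Finset.sum_congr rfl fun g _ => ?_
    simp only [Matrix.sub_apply, Matrix.smul_apply, smul_eq_mul, hab, hba]
    ring
  have step2 : ∑ g : G, (((r g g : Fˣ) : F) * ((r (-u) u : Fˣ) : F))
            * (b g (g + u) * a (g + u) g)
      = ∑ g : G, (((r (g - u) (g - u) : Fˣ) : F) * ((r (-u) u : Fˣ) : F))
            * (b (g - u) g * a g (g - u)) := by
    refine Fintype.sum_equiv (Equiv.addRight u) _ _ fun g => ?_
    simp [Equiv.addRight, add_sub_cancel_right]
  rw [step1, step2, ← Finset.sum_sub_distrib]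
  refine Finset.sum_congr rfl fun g _ => ?_
  have hkey : ((r (g - u) (g - u) : Fˣ) : F) * ((r (-u) u : Fˣ) : F)
      = ((r g g : Fˣ) : F) * (((r g u)⁻¹ : Fˣ) : F) * (((r u g)⁻¹ : Fˣ) : F) := by
    rw [← Units.val_mul, key g]
    push_cast
    ring
  rw [hkey]
  ring
end

section
/- Let G be a finite additive abelian group, F a field, and r : G → G → Fˣ a skew-symmetric bicharacter (r(u,v)r(v,u) = 1 for all u,v). For homogeneous matrices a, b ∈ Matrix G G F of degrees u, v respectively, define [a,b] = a*b − r(v,u) • b*a. Then tr_q([a,b]) = 0, where tr_q(c) = Σ_g r(g,g) c g g. Consequently sl_q = {c ∈ Matrix G G F : tr_q(c) = 0} contains all brackets of homogeneous elements. -/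
/-- Lemma 2.4 (skew-symmetric case): for a skew-symmetric bicharacter `r`, the quantum
trace of the bracket `[a,b] = ab − r(v,u) ba` of homogeneous matrices vanishes, so
`sl_q = {c : tr_q(c) = 0}` contains all brackets of homogeneous elements. -/
theorem sl_q_contains_brackets {G F : Type*} [AddCommGroup G] [Fintype G]
    [DecidableEq G] [Field F]
    (r : G → G → Fˣ)
    (hr1 : ∀ g h k, r (g + h) k = r g k * r h k)
    (hr2 : ∀ g h k, r g (h + k) = r g h * r g k)
    (hskew : ∀ u v, r u v * r v u = 1)
    (u v : G) (a b : Matrix G G F)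
    (ha : ∀ i j, a i j ≠ 0 → i = j + u)
    (hb : ∀ i j, b i j ≠ 0 → i = j + v) :
    ∑ g : G, ((r g g : Fˣ) : F) * ((a * b - ((r v u : Fˣ) : F) • (b * a)) g g) = 0 ∧
    (a * b - ((r v u : Fˣ) : F) • (b * a)) ∈
      {c : Matrix G G F | ∑ g : G, ((r g g : Fˣ) : F) * c g g = 0} := by
  have h0 : ∀ g : G, r g 0 = 1 := by
    intro g
    have h := hr2 g 0 0
    rw [add_zero] at h
    have : r g 0 * r g 0 = r g 0 * 1 := by rw [mul_one]; exact h.symm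
    exact mul_left_cancel this
  -- key pointwise identity
  have key : ∀ x y : G, a x y * b y x ≠ 0 →
      ((r x x : Fˣ) : F) = ((r v u : Fˣ) : F) * ((r y y : Fˣ) : F) := by
    intro x y hne
    have hane : a x y ≠ 0 := fun h => hne (by rw [h, zero_mul])
    have hbne : b y x ≠ 0 := fun h => hne (by rw [h, mul_zero])
    have hx : x = y + u := ha x y hane
    have hy : y = x + v := hb y x hbne
    have huv : u = -v := by
      have hxx : x = x + (v + u) := by rw [← add_assoc, ← hy]; exact hx
      have h2 : v + u = 0 := (left_eq_add.mp hxx).symm ▸ rfl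
      exact eq_neg_of_add_eq_zero_right h2
    have e1 : r v u = (r v v)⁻¹ := by
      rw [huv]
      have h := hr2 v v (-v)
      rw [add_neg_cancel, h0] at h
      exact (inv_eq_of_mul_eq_one_right h.symm).symm
    have e2 : r y y = r x x * r x v * (r v x * r v v) := by
      rw [hy, hr1, hr2, hr2]
    have kk : r v u * r y y = r x x := by
      rw [e1, e2]
      have hs := hskew x v
      have hre : r x x * r x v * (r v x * r v v) = (r x v * r v x) * (r v v * r x x) := by
        simp [mul_comm, mul_assoc, mul_left_comm]
      rw [hre, hs, one_mul]
      exact inv_mul_cancel_left _ _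
    exact_mod_cast congrArg Units.val kk.symm
  have hsum : ∑ g : G, ((r g g : Fˣ) : F) * ((a * b) g g)
      = ((r v u : Fˣ) : F) * ∑ g : G, ((r g g : Fˣ) : F) * ((b * a) g g) := by
    have hd : ∑ x : G, ((r x x : Fˣ) : F) * ((a * b) x x)
        = ∑ x : G, ∑ y : G, ((r x x : Fˣ) : F) * (a x y * b y x) := by
      simp [Matrix.mul_apply, Finset.mul_sum]
    have hd2 : ((r v u : Fˣ) : F) * ∑ x : G, ((r x x : Fˣ) : F) * ((b * a) x x)
        = ∑ x : G, ∑ y : G, ((r v u : Fˣ) : F) * (((r y y : Fˣ) : F) * (b y x * a x y)) := by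
      simp only [Matrix.mul_apply, Finset.mul_sum]
      rw [Finset.sum_comm]
    rw [hd, hd2]
    refine Finset.sum_congr rfl fun x _ => Finset.sum_congr rfl fun y _ => ?_
    by_cases h : a x y * b y x = 0
    · rw [h, mul_zero, mul_comm (b y x) (a x y), h, mul_zero, mul_zero]
    · rw [key x y h, mul_comm (b y x) (a x y)]; ring
  have hmain : ∑ g : G, ((r g g : Fˣ) : F) * ((a * b - ((r v u : Fˣ) : F) • (b * a)) g g) = 0 := by
    simp only [Matrix.sub_apply, Matrix.smul_apply, smul_eq_mul, mul_sub, Finset.sum_sub_distrib]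
    rw [sub_eq_zero, hsum, Finset.mul_sum]
    exact Finset.sum_congr rfl fun g _ => by ring
  exact ⟨hmain, hmain⟩
end

section
/- Let G be a finite additive abelian group, F a field, r : G → G → Fˣ a skew-symmetric bicharacter, and M ∈ Matrix G G F a fixed matrix. For u ∈ G, say a homogeneous matrix a of degree u lies in osp_u if for all g, h ∈ G: a (u+g) g * M (u+g) h = − r(g,u) * M g (u+h) * a (u+h) h. Then for a ∈ osp_u and b ∈ osp_v, the bracket [a,b] = a*b − r(v,u) • b*a lies in osp_{u+v}. -/
private lemma mul_entry_of_deg {G F : Type*} [AddCommGroup G] [Fintype G]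
    [DecidableEq G] [Field F] (v : G) (a b : Matrix G G F)
    (hb : ∀ i j, b i j ≠ 0 → i = j + v) (i j : G) :
    (a * b) i j = a i (j + v) * b (j + v) j := by
  rw [Matrix.mul_apply]
  apply Finset.sum_eq_single
  · intro k _ hk
    by_cases h : b k j = 0
    · simp [h]
    · exact absurd (hb k j h) hk
  · simp

/-- Lemma 2.5 (skew-symmetric, scalar-block case): if the homogeneous matrices `a, b` of
degrees `u, v` satisfy the `osp` condition with respect to `M`, then their bracket
`[a,b] = ab − r(v,u) ba` is homogeneous of degree `u+v` and satisfies the `osp` condition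
for `u+v`. -/
theorem osp_closed_under_bracket {G F : Type*} [AddCommGroup G] [Fintype G]
    [DecidableEq G] [Field F]
    (r : G → G → Fˣ)
    (hr1 : ∀ g h k, r (g + h) k = r g k * r h k)
    (hr2 : ∀ g h k, r g (h + k) = r g h * r g k)
    (hskew : ∀ u' v', r u' v' * r v' u' = 1)
    (M : Matrix G G F) (u v : G) (a b : Matrix G G F)
    (hadeg : ∀ i j, a i j ≠ 0 → i = j + u)
    (hbdeg : ∀ i j, b i j ≠ 0 → i = j + v)
    (haosp : ∀ g h : G, a (u + g) g * M (u + g) h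
        = - ((r g u : Fˣ) : F) * (M g (u + h) * a (u + h) h))
    (hbosp : ∀ g h : G, b (v + g) g * M (v + g) h
        = - ((r g v : Fˣ) : F) * (M g (v + h) * b (v + h) h)) :
    (∀ i j, (a * b - ((r v u : Fˣ) : F) • (b * a)) i j ≠ 0 → i = j + (u + v)) ∧
    (∀ g h : G, (a * b - ((r v u : Fˣ) : F) • (b * a)) ((u + v) + g) g * M ((u + v) + g) h
        = - ((r g (u + v) : Fˣ) : F) *
            (M g ((u + v) + h) * (a * b - ((r v u : Fˣ) : F) • (b * a)) ((u + v) + h) h)) := by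
  have hab := mul_entry_of_deg v a b hbdeg
  have hba := mul_entry_of_deg u b a hadeg
  constructor
  · intro i j hne
    simp only [Matrix.sub_apply, Matrix.smul_apply, smul_eq_mul] at hne
    by_cases h0 : (a * b) i j = 0
    · have h1 : (b * a) i j ≠ 0 := by
        intro h1; exact hne (by rw [h0, h1]; ring)
      rw [hba i j] at h1
      have := hbdeg i (j + u) (left_ne_zero_of_mul h1)
      rw [this]; abel
    · rw [hab i j] at h0
      have := hadeg i (j + v) (left_ne_zero_of_mul h0)
      rw [this]; abel
  · intro g h
    simp only [Matrix.sub_apply, Matrix.smul_apply, smul_eq_mul, hab, hba]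
    have h1 := haosp (g + v) h
    rw [show u + (g + v) = u + v + g by abel, show u + h = h + u by abel] at h1
    have h2 := hbosp g (h + u)
    rw [show v + g = g + v by abel, show v + (h + u) = u + v + h by abel] at h2
    have h3 := hbosp (g + u) h
    rw [show v + (g + u) = u + v + g by abel, show v + h = h + v by abel] at h3
    have h4 := haosp g (h + v)
    rw [show u + g = g + u by abel, show u + (h + v) = u + v + h by abel] at h4
    have e1 : ((r (g + v) u : Fˣ) : F) = ((r g u : Fˣ) : F) * ((r v u : Fˣ) : F) := by
      rw [hr1]; rfl
    have e2 : ((r (g + u) v : Fˣ) : F) = ((r g v : Fˣ) : F) * ((r u v : Fˣ) : F) := by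
      rw [hr1]; rfl
    have e3 : ((r g (u + v) : Fˣ) : F) = ((r g u : Fˣ) : F) * ((r g v : Fˣ) : F) := by
      rw [hr2]; rfl
    have e4 : ((r u v : Fˣ) : F) * ((r v u : Fˣ) : F) = 1 := by
      rw [← Units.val_mul, hskew]; rfl
    rw [e1] at h1
    rw [e2] at h3
    rw [e3]
    linear_combination (b (g + v) g) * h1
      - ((r g u : Fˣ) : F) * ((r v u : Fˣ) : F) * (a (h + u) h) * h2
      - ((r v u : Fˣ) : F) * (a (g + u) g) * h3
      + ((r v u : Fˣ) : F) * ((r g v : Fˣ) : F) * ((r u v : Fˣ) : F) * (b (h + v) h) * h4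
      - ((r g u : Fˣ) : F) * ((r g v : Fˣ) : F) * (M g (u + v + h)) * (a (u + v + h) (h + v)) * (b (h + v) h) * e4
end
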